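/- For every real ν' > 2, there exists a unique a > 1 satisfying a log a − a + 1 − (a − 1)²/ν' = 0. -/

import Mathlib

/-!
Dividing by `(a - 1)²`, the roots `a > 1` are the solutions of `h a = ν'⁻¹` for
`h a = (a log a - a + 1) / (a - 1)²`. The inequality `log a > 2 (a - 1) / (a + 1)` (for `a > 1`)
makes `h` strictly decreasing on `(1, ∞)` and gives `h a > 1 / (a + 1)`, so `h (ν' / 2) > ν'⁻¹`;
`log s ≤ s - 1` gives `h (s²) ≤ (2s + 1) / (s + 1)²`, so `h (4ν'²) < ν'⁻¹`. The intermediate value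
theorem then yields exactly one root.
-/

open Real Set

lemma two_mul_sub_one_div_add_one_lt_log {x : ℝ} (hx : 1 < x) :
    2 * (x - 1) / (x + 1) < log x := by
  set t := (x - 1) / (x + 1) with ht
  have ht0 : 0 < t := div_pos (by linarith) (by linarith)
  have ht1 : t < 1 := by rw [ht, div_lt_one (by linarith)]; linarith
  have hlog : log (1 + t) - log (1 - t) = log x := by
    rw [← log_div (by linarith) (by linarith), ht]
    congr 1
    field_simp
    ring
  have hsum := hasSum_log_sub_log_of_abs_lt_one (abs_lt.2 ⟨by linarith, ht1⟩)
  rw [hlog] at hsum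
  -- the series `log x = 2 (t + t³/3 + t⁵/5 + ⋯)` has positive terms
  have h2 := sum_le_hasSum (Finset.range 2) (fun k _ => by positivity) hsum
  simp only [Finset.sum_range_succ, Finset.sum_range_zero] at h2
  rw [mul_div_assoc]
  norm_num at h2
  nlinarith [pow_pos ht0 3]

noncomputable def entropyRatio (a : ℝ) : ℝ := (a * log a - a + 1) / (a - 1) ^ 2

lemma hasDerivAt_entropyRatio {a : ℝ} (ha : 1 < a) :
    HasDerivAt entropyRatio ((2 * (a - 1) - (a + 1) * log a) / (a - 1) ^ 3) a := by
  have hnum : HasDerivAt (fun x => x * log x - x + 1) (log a) a := by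
    simpa using ((hasDerivAt_mul_log (by positivity : a ≠ 0)).sub (hasDerivAt_id a)).add_const 1
  have hden : HasDerivAt (fun x => (x - 1) ^ 2) (2 * (a - 1)) a := by
    simpa using ((hasDerivAt_id a).sub_const 1).fun_pow 2
  have hne : (a - 1) ^ 2 ≠ 0 := by positivity
  refine (hnum.fun_div hden hne).congr_deriv ?_
  have : a - 1 ≠ 0 := by linarith
  field_simp
  ring

lemma entropyRatio_strictAntiOn : StrictAntiOn entropyRatio (Ioi 1) := by
  refine strictAntiOn_of_deriv_neg (convex_Ioi 1)
    (fun a ha => (hasDerivAt_entropyRatio ha).continuousAt.continuousWithinAt) fun a ha => ?_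
  have ha : 1 < a := by rwa [interior_Ioi] at ha
  rw [(hasDerivAt_entropyRatio ha).deriv]
  have h := two_mul_sub_one_div_add_one_lt_log ha
  rw [div_lt_iff₀ (by linarith : (0:ℝ) < a + 1)] at h
  exact div_neg_of_neg_of_pos (by linarith) (pow_pos (sub_pos.2 ha) 3)

lemma continuousOn_entropyRatio : ContinuousOn entropyRatio (Ioi 1) :=
  fun _ ha => (hasDerivAt_entropyRatio ha).continuousAt.continuousWithinAt

lemma inv_add_one_lt_entropyRatio {a : ℝ} (ha : 1 < a) : (a + 1)⁻¹ < entropyRatio a := by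
  have h := two_mul_sub_one_div_add_one_lt_log ha
  have ha1 : 0 < a + 1 := by linarith
  rw [div_lt_iff₀ ha1] at h
  rw [entropyRatio, lt_div_iff₀ (by nlinarith), inv_mul_eq_div, div_lt_iff₀ ha1]
  nlinarith

lemma entropyRatio_sq_le {s : ℝ} (hs : 1 < s) :
    entropyRatio (s ^ 2) ≤ (2 * s + 1) / (s + 1) ^ 2 := by
  have hlog : log (s ^ 2) ≤ 2 * (s - 1) := by
    rw [log_pow]; push_cast; linarith [log_le_sub_one_of_pos (by linarith : 0 < s)]
  have hs1 : 0 < (s - 1) ^ 2 := by nlinarith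
  have hden : (s ^ 2 - 1) ^ 2 = (s - 1) ^ 2 * (s + 1) ^ 2 := by ring
  rw [entropyRatio, hden, div_le_div_iff₀ (by positivity) (by positivity)]
  have := mul_le_mul_of_nonneg_left hlog (by positivity : 0 ≤ s ^ 2)
  nlinarith [mul_le_mul_of_nonneg_right this (by positivity : 0 ≤ (s + 1) ^ 2)]

lemma sub_div_eq_zero_iff_entropyRatio_eq {a ν : ℝ} (ha : a ≠ 1) :
    a * log a - a + 1 - (a - 1) ^ 2 / ν = 0 ↔ entropyRatio a = ν⁻¹ := by
  have : (a - 1) ^ 2 ≠ 0 := pow_ne_zero 2 (sub_ne_zero.2 ha)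
  rw [sub_eq_zero, entropyRatio, div_eq_iff this, div_eq_inv_mul]

theorem stmt11 (ν' : ℝ) (hν : 2 < ν') :
    ∃! a : ℝ, 1 < a ∧ a * Real.log a - a + 1 - (a - 1) ^ 2 / ν' = 0 := by
  have hν0 : 0 < ν' := by linarith
  have h_low : ν'⁻¹ ≤ entropyRatio (ν' / 2) := by
    refine (lt_trans ?_ (inv_add_one_lt_entropyRatio (by linarith))).le
    rw [inv_lt_inv₀ hν0 (by linarith)]
    linarith
  have h_high : entropyRatio (4 * ν' ^ 2) ≤ ν'⁻¹ := by
    rw [show 4 * ν' ^ 2 = (2 * ν') ^ 2 by ring]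
    refine ((entropyRatio_sq_le (by linarith)).trans_lt ?_).le
    rw [div_lt_iff₀ (by positivity), inv_mul_eq_div, lt_div_iff₀ hν0]
    nlinarith
  obtain ⟨c, hc, hc_eq⟩ : ∃ c ∈ Icc (ν' / 2) (4 * ν' ^ 2), entropyRatio c = ν'⁻¹ :=
    intermediate_value_Icc' (by nlinarith)
      (continuousOn_entropyRatio.mono fun x hx => by simp only [mem_Ioi]; linarith [hx.1])
      ⟨h_high, h_low⟩
  have hc1 : 1 < c := by linarith [hc.1]
  refine ⟨c, ⟨hc1, (sub_div_eq_zero_iff_entropyRatio_eq hc1.ne').2 hc_eq⟩, ?_⟩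
  rintro b ⟨hb1, hb⟩
  refine entropyRatio_strictAntiOn.injOn hb1 hc1 ?_
  rw [(sub_div_eq_zero_iff_entropyRatio_eq hb1.ne').1 hb, hc_eq]
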